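/- arXiv:2407.04540 — 2 statements merged into one kernel-verified Lean document; each statement's English description precedes it below -/
import Mathlib

section
/- Let s ≥ 1 and 0 ≤ r ≤ s be natural numbers. Then for all real x with 0 ≤ x ≤ 1, we have |G_{r,s}'(x) − s·x^{s−1}| ≤ 2·s²·e^{−r²/(2s)}, where G_{r,s}' is the derivative of G_{r,s}. -/
open Polynomial in
lemma abs_sin_nat_mul_le (k : ℕ) (θ : ℝ) : |Real.sin (k * θ)| ≤ k * |Real.sin θ| := by
  induction k with
  | zero => simp
  | succ n ih =>
    have h : ((n:ℝ)+1) * θ = n*θ + θ := by ring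
    push_cast
    rw [h, Real.sin_add]
    calc |Real.sin (n*θ) * Real.cos θ + Real.cos (n*θ) * Real.sin θ|
        ≤ |Real.sin (n*θ) * Real.cos θ| + |Real.cos (n*θ) * Real.sin θ| := abs_add_le _ _
      _ ≤ |Real.sin (n*θ)| * 1 + 1 * |Real.sin θ| := by
          rw [abs_mul, abs_mul]
          gcongr <;> first | exact Real.abs_cos_le_one θ | exact Real.abs_cos_le_one _
      _ ≤ n * |Real.sin θ| + 1 * |Real.sin θ| := by simpa using ih
      _ = (n+1) * |Real.sin θ| := by ring

lemma U_eval_one (m : ℕ) : (Polynomial.Chebyshev.U ℝ (m:ℤ)).eval 1 = m + 1 := by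
  induction m using Nat.twoStepInduction with
  | zero => simp [Polynomial.Chebyshev.U_zero]
  | one => norm_num [Polynomial.Chebyshev.U_one]
  | more n ih1 ih2 =>
    have h := Polynomial.Chebyshev.U_add_two ℝ (n:ℤ)
    have : ((n:ℤ)+2) = ((n+2:ℕ):ℤ) := by push_cast; ring
    rw [this] at h
    rw [h]
    push_cast at ih1 ih2 ⊢
    simp only [Polynomial.eval_sub, Polynomial.eval_mul, Polynomial.eval_ofNat,
      Polynomial.eval_X]
    rw [show ((n:ℤ)+1) = ((n+1:ℕ):ℤ) by push_cast; ring] at *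
    rw [ih1, ih2]; push_cast; ring

lemma abs_U_eval_le (m : ℕ) (x : ℝ) (hx0 : 0 ≤ x) (hx1 : x ≤ 1) :
    |(Polynomial.Chebyshev.U ℝ (m:ℤ)).eval x| ≤ m + 1 := by
  rcases eq_or_lt_of_le hx1 with h1 | h1
  · rw [h1, U_eval_one]
    rw [abs_of_nonneg (by positivity)]
  · set θ := Real.arccos x with hθ
    have hcos : Real.cos θ = x := Real.cos_arccos (by linarith) hx1
    have hsinpos : 0 < Real.sin θ := by
      rw [hθ, Real.sin_arccos]
      have : 0 < 1 - x^2 := by nlinarith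
      positivity
    have hU := Polynomial.Chebyshev.U_real_cos θ (m:ℤ)
    rw [hcos] at hU
    have key : |(Polynomial.Chebyshev.U ℝ (m:ℤ)).eval x| * Real.sin θ
        ≤ ((m:ℝ)+1) * Real.sin θ := by
      rw [← abs_of_pos hsinpos, ← abs_mul, hU]
      have := abs_sin_nat_mul_le (m+1) θ
      push_cast at this ⊢
      exact this
    exact le_of_mul_le_mul_right key hsinpos

lemma abs_derivT_eval_le (n : ℕ) (x : ℝ) (hx0 : 0 ≤ x) (hx1 : x ≤ 1) :
    |(Polynomial.derivative (Polynomial.Chebyshev.T ℝ (n:ℤ))).eval x| ≤ (n:ℝ)^2 := by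
  rw [Polynomial.Chebyshev.T_derivative_eq_U]
  cases n with
  | zero => simp
  | succ m =>
    rw [show ((m+1:ℕ):ℤ) - 1 = (m:ℤ) by push_cast; ring]
    simp only [Polynomial.eval_mul, Polynomial.eval_intCast, abs_mul]
    have h := abs_U_eval_le m x hx0 hx1
    have : |((((m:ℕ)+1:ℕ):ℤ):ℝ)| = (m:ℝ)+1 := by
      push_cast; rw [abs_of_nonneg (by positivity)]
    push_cast at this ⊢
    calc |(m:ℝ)+1| * |(Polynomial.Chebyshev.U ℝ (m:ℤ)).eval x|
        ≤ ((m:ℝ)+1) * ((m:ℝ)+1) := by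
          rw [abs_of_nonneg (by positivity : (0:ℝ) ≤ (m:ℝ)+1)]
          gcongr
      _ = ((m:ℝ)+1)^2 := by ring

open Polynomial in
lemma sum_choose_T (s : ℕ) :
    ∑ j ∈ Finset.range (s+1), (s.choose j : ℝ) • Polynomial.Chebyshev.T ℝ (2*(j:ℤ) - s)
      = (2 * Polynomial.X)^s := by
  induction s with
  | zero => simp [Polynomial.Chebyshev.T_zero]
  | succ s ih =>
    have expand : ∀ n : ℤ, (2 * Polynomial.X : Polynomial ℝ) * Polynomial.Chebyshev.T ℝ n
        = Polynomial.Chebyshev.T ℝ (n+1) + Polynomial.Chebyshev.T ℝ (n-1) := by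
      intro n
      linear_combination -(Polynomial.Chebyshev.T_add_one ℝ n)
    rw [pow_succ', ← ih, Finset.mul_sum]
    have step : ∀ j : ℕ, (2 * Polynomial.X : Polynomial ℝ) *
          ((s.choose j : ℝ) • Polynomial.Chebyshev.T ℝ (2*(j:ℤ) - s))
        = (s.choose j : ℝ) • Polynomial.Chebyshev.T ℝ (2*(j:ℤ) - s + 1)
          + (s.choose j : ℝ) • Polynomial.Chebyshev.T ℝ (2*(j:ℤ) - s - 1) := by
      intro j
      rw [mul_smul_comm, expand, smul_add]
    simp only [step, Finset.sum_add_distrib]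
    -- LHS: split choose (s+1)
    have hsplit : ∀ j : ℕ, ((s+1).choose j : ℝ) = (s.choose j : ℝ)
        + (if j = 0 then (0:ℝ) else (s.choose (j-1) : ℝ)) := by
      intro j
      cases j with
      | zero => simp
      | succ k => simp [Nat.choose_succ_succ]; push_cast; ring
    calc ∑ j ∈ Finset.range (s+2), ((s+1).choose j : ℝ) • Polynomial.Chebyshev.T ℝ (2*(j:ℤ) - (s+1))
        = ∑ j ∈ Finset.range (s+2), ((s.choose j : ℝ) • Polynomial.Chebyshev.T ℝ (2*(j:ℤ) - s - 1)
            + (if j = 0 then (0:ℝ) else (s.choose (j-1) : ℝ)) • Polynomial.Chebyshev.T ℝ (2*(j:ℤ) - s - 1)) := by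
          apply Finset.sum_congr rfl
          intro j _
          rw [show (2*(j:ℤ) - ((s:ℤ)+1)) = 2*(j:ℤ) - s - 1 by ring, hsplit j, add_smul]
      _ = (∑ j ∈ Finset.range (s+2), (s.choose j : ℝ) • Polynomial.Chebyshev.T ℝ (2*(j:ℤ) - s - 1))
            + ∑ j ∈ Finset.range (s+2), (if j = 0 then (0:ℝ) else (s.choose (j-1) : ℝ)) • Polynomial.Chebyshev.T ℝ (2*(j:ℤ) - s - 1) := Finset.sum_add_distrib
      _ = (∑ j ∈ Finset.range (s+1), (s.choose j : ℝ) • Polynomial.Chebyshev.T ℝ (2*(j:ℤ) - s - 1))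
            + ∑ j ∈ Finset.range (s+1), (s.choose j : ℝ) • Polynomial.Chebyshev.T ℝ (2*(j:ℤ) - s + 1) := by
          congr 1
          · rw [Finset.sum_range_succ]; simp
          · rw [Finset.sum_range_succ']
            simp only [Nat.succ_ne_zero, if_false, Nat.add_sub_cancel, if_true, zero_smul,
              add_zero, Nat.add_eq_zero, and_false, eq_self_iff_true]
            apply Finset.sum_congr rfl
            intro k _
            congr 1
            push_cast; ring
      _ = _ := by rw [add_comm]


lemma sum_exp_eq (s : ℕ) (t : ℝ) :
    ∑ j ∈ Finset.range (s+1), (s.choose j : ℝ) * Real.exp (t * (2*(j:ℝ) - s))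
      = (Real.exp t + Real.exp (-t))^s := by
  rw [add_pow]
  apply Finset.sum_congr rfl
  intro j hj
  have hj' : j ≤ s := Nat.lt_succ_iff.mp (Finset.mem_range.mp hj)
  rw [← Real.exp_nat_mul, ← Real.exp_nat_mul, ← Real.exp_add,
    show t*(2*(j:ℝ)-s) = (j:ℝ)*t + (((s:ℝ))-(j:ℝ))*(-t) by ring, ← Nat.cast_sub hj']
  ring

lemma tail_bound (r s : ℕ) (hs : 1 ≤ s) (hrs : r ≤ s) :
    ∑ j ∈ Finset.range (s+1), (if |2*(j:ℤ) - s| ≤ (r:ℤ) then (0:ℝ) else (s.choose j : ℝ))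
      ≤ 2^s * (2 * Real.exp (-(r:ℝ)^2 / (2*s))) := by
  have hs0 : (0:ℝ) < s := by exact_mod_cast hs
  set lam : ℝ := r / s with hlam
  have hlam0 : 0 ≤ lam := by positivity
  have pointwise : ∀ j ∈ Finset.range (s+1),
      (if |2*(j:ℤ) - s| ≤ (r:ℤ) then (0:ℝ) else (s.choose j : ℝ))
        ≤ (s.choose j : ℝ) * Real.exp (lam * (2*(j:ℝ) - s)) * Real.exp (-(lam*r))
          + (s.choose j : ℝ) * Real.exp ((-lam) * (2*(j:ℝ) - s)) * Real.exp (-(lam*r)) := by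
    intro j _
    split_ifs with h
    · positivity
    · push_neg at h
      have hC : (0:ℝ) ≤ s.choose j := by positivity
      rcases lt_abs.mp h with h' | h'
      · have hr : (r:ℝ) ≤ 2*(j:ℝ) - s := by exact_mod_cast h'.le
        have h1 : 1 ≤ Real.exp (lam * (2*(j:ℝ)-s)) * Real.exp (-(lam*r)) := by
          rw [← Real.exp_add]
          apply Real.one_le_exp
          nlinarith
        nlinarith [Real.exp_pos ((-lam) * (2*(j:ℝ) - s)), Real.exp_pos (-(lam*r)),
          mul_le_mul_of_nonneg_left h1 hC,
          mul_nonneg (mul_nonneg hC (Real.exp_pos ((-lam) * (2*(j:ℝ) - s))).le)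
            (Real.exp_pos (-(lam*r))).le]
      · have hr : (r:ℝ) ≤ -(2*(j:ℝ) - s) := by
          have : ((r:ℤ):ℝ) ≤ ((-(2*(j:ℤ) - s) : ℤ) : ℝ) := by exact_mod_cast h'.le
          push_cast at this; linarith
        have h1 : 1 ≤ Real.exp ((-lam) * (2*(j:ℝ)-s)) * Real.exp (-(lam*r)) := by
          rw [← Real.exp_add]
          apply Real.one_le_exp
          nlinarith
        nlinarith [Real.exp_pos (lam * (2*(j:ℝ) - s)), Real.exp_pos (-(lam*r)),
          mul_le_mul_of_nonneg_left h1 hC,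
          mul_nonneg (mul_nonneg hC (Real.exp_pos (lam * (2*(j:ℝ) - s))).le)
            (Real.exp_pos (-(lam*r))).le]
  calc ∑ j ∈ Finset.range (s+1), (if |2*(j:ℤ) - s| ≤ (r:ℤ) then (0:ℝ) else (s.choose j : ℝ))
      ≤ ∑ j ∈ Finset.range (s+1),
          ((s.choose j : ℝ) * Real.exp (lam * (2*(j:ℝ) - s)) * Real.exp (-(lam*r))
          + (s.choose j : ℝ) * Real.exp ((-lam) * (2*(j:ℝ) - s)) * Real.exp (-(lam*r))) :=
        Finset.sum_le_sum pointwise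
    _ = ((Real.exp lam + Real.exp (-lam))^s + (Real.exp (-lam) + Real.exp (-(-lam)))^s)
          * Real.exp (-(lam*r)) := by
        rw [Finset.sum_add_distrib, ← Finset.sum_mul, ← Finset.sum_mul,
          sum_exp_eq s lam, sum_exp_eq s (-lam)]
        ring
    _ = 2 * (Real.exp lam + Real.exp (-lam))^s * Real.exp (-(lam*r)) := by
        rw [neg_neg]; ring
    _ ≤ 2 * (2^s * Real.exp ((s:ℝ) * (lam^2/2))) * Real.exp (-(lam*r)) := by
        have hch : Real.exp lam + Real.exp (-lam) = 2 * Real.cosh lam := by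
          rw [Real.cosh_eq]; ring
        have hb : (Real.exp lam + Real.exp (-lam))^s ≤ 2^s * Real.exp ((s:ℝ) * (lam^2/2)) := by
          rw [hch, mul_pow, Real.exp_nat_mul]
          exact mul_le_mul_of_nonneg_left
            (pow_le_pow_left₀ (Real.cosh_pos lam).le (Real.cosh_le_exp_half_sq lam) s)
            (by positivity)
        gcongr
    _ = 2^s * (2 * Real.exp (-(r:ℝ)^2 / (2*s))) := by
        have he : Real.exp ((s:ℝ) * (lam^2/2)) * Real.exp (-(lam*r))
            = Real.exp (-(r:ℝ)^2/(2*s)) := by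
          rw [← Real.exp_add]
          congr 1
          rw [hlam]; field_simp; ring
        rw [show (2:ℝ) * (2^s * Real.exp ((s:ℝ)*(lam^2/2))) * Real.exp (-(lam*r))
            = 2^s * (2 * (Real.exp ((s:ℝ)*(lam^2/2)) * Real.exp (-(lam*r)))) by ring, he]



/-- Φ_t, the Chebyshev polynomial of the first kind over ℝ (indexed by ℤ,
with Φ_{-t} = Φ_t): Φ_0(x)=1, Φ_1(x)=x, Φ_{t+1}(x)=2x·Φ_t(x)−Φ_{t−1}(x). -/
noncomputable def Phi (t : ℤ) : Polynomial ℝ := Polynomial.Chebyshev.T ℝ t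

/-- G_{r,s}(x) = E_{t∼D_s}[Φ_t(x)·1{|t| ≤ r}]
  = 2^{−s} ∑_{j=0}^{s} binom(s,j)·Φ_{2j−s}(x)·1{|2j−s| ≤ r}. -/
noncomputable def G (r s : ℕ) : Polynomial ℝ :=
  ((2 : ℝ) ^ s)⁻¹ • ∑ j ∈ Finset.range (s + 1),
    (s.choose j : ℝ) • (if |2 * (j : ℤ) - s| ≤ (r : ℤ) then Phi (2 * j - s) else 0)


/-- For s ≥ 1, 0 ≤ r ≤ s, and 0 ≤ x ≤ 1:
|G_{r,s}'(x) − s·x^{s−1}| ≤ 2·s²·e^{−r²/(2s)}. -/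
theorem G_deriv_approx (r s : ℕ) (hs : 1 ≤ s) (hrs : r ≤ s)
    (x : ℝ) (hx0 : 0 ≤ x) (hx1 : x ≤ 1) :
    |(Polynomial.derivative (G r s)).eval x - (s : ℝ) * x ^ (s - 1)| ≤
      2 * (s : ℝ) ^ 2 * Real.exp (-(r : ℝ) ^ 2 / (2 * s)) := by
  classical
  set f : ℕ → ℝ := fun j =>
    Polynomial.eval x (Polynomial.derivative (Polynomial.Chebyshev.T ℝ (2*(j:ℤ) - s))) with hf
  have hGd : (Polynomial.derivative (G r s)).eval x
      = ((2:ℝ)^s)⁻¹ * ∑ j ∈ Finset.range (s+1), (s.choose j : ℝ) *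
          (if |2*(j:ℤ) - s| ≤ (r:ℤ) then f j else 0) := by
    unfold G Phi
    rw [Polynomial.derivative_smul, Polynomial.derivative_sum, Polynomial.eval_smul]
    simp only [Polynomial.derivative_smul, apply_ite Polynomial.derivative,
      Polynomial.derivative_zero, Polynomial.eval_finset_sum, Polynomial.eval_smul,
      smul_eq_mul, apply_ite (Polynomial.eval x), Polynomial.eval_zero, hf]
  have hxs : (s:ℝ) * x^(s-1)
      = ((2:ℝ)^s)⁻¹ * ∑ j ∈ Finset.range (s+1), (s.choose j : ℝ) * f j := by
    have h := congrArg (fun p => Polynomial.eval x (Polynomial.derivative p)) (sum_choose_T s)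
    simp only [Polynomial.derivative_sum, Polynomial.derivative_smul,
      Polynomial.eval_finset_sum, Polynomial.eval_smul, smul_eq_mul,
      Polynomial.derivative_pow, Polynomial.derivative_mul, Polynomial.derivative_ofNat,
      Polynomial.derivative_X, Polynomial.eval_mul, Polynomial.eval_pow,
      Polynomial.eval_ofNat, Polynomial.eval_X, Polynomial.eval_natCast,
      Polynomial.eval_add, Polynomial.eval_zero, Polynomial.eval_one, Polynomial.eval_C,
      zero_mul, zero_add, mul_one] at h
    simp only [hf]
    have h2 : ((2:ℝ)*x)^(s-1) = 2^(s-1) * x^(s-1) := mul_pow 2 x (s-1)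
    have h3 : (2:ℝ)^(s-1) * 2 = 2^s := by
      rw [← pow_succ, Nat.sub_add_cancel hs]
    rw [h, h2]
    field_simp
    linear_combination (-(x^(s-1))) * h3
  have hdiff : (Polynomial.derivative (G r s)).eval x - (s:ℝ) * x^(s-1)
      = ((2:ℝ)^s)⁻¹ * ∑ j ∈ Finset.range (s+1),
          ((s.choose j : ℝ) * ((if |2*(j:ℤ) - s| ≤ (r:ℤ) then f j else 0) - f j)) := by
    rw [hGd, hxs, ← mul_sub, ← Finset.sum_sub_distrib]
    congr 1
    apply Finset.sum_congr rfl
    intro j _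
    ring
  rw [hdiff, abs_mul, abs_of_pos (show (0:ℝ) < ((2:ℝ)^s)⁻¹ by positivity)]
  have hterm : ∀ j ∈ Finset.range (s+1),
      |(s.choose j : ℝ) * ((if |2*(j:ℤ) - s| ≤ (r:ℤ) then f j else 0) - f j)|
        ≤ (s:ℝ)^2 * (if |2*(j:ℤ) - s| ≤ (r:ℤ) then (0:ℝ) else (s.choose j : ℝ)) := by
    intro j hj
    have hj' : j ≤ s := Nat.lt_succ_iff.mp (Finset.mem_range.mp hj)
    split_ifs with h
    · simp
    · rw [zero_sub, abs_mul, abs_neg]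
      have hfb : |f j| ≤ (s:ℝ)^2 := by
        have hn : (2*(j:ℤ) - s).natAbs ≤ s := by omega
        have hT : Polynomial.Chebyshev.T ℝ (2*(j:ℤ)-s)
            = Polynomial.Chebyshev.T ℝ (((2*(j:ℤ)-s).natAbs : ℕ) : ℤ) :=
          (Polynomial.Chebyshev.T_natAbs ℝ _).symm
        rw [hf]; dsimp only
        rw [hT]
        calc |(Polynomial.derivative (Polynomial.Chebyshev.T ℝ
                (((2*(j:ℤ)-s).natAbs : ℕ) : ℤ))).eval x|
            ≤ ((2*(j:ℤ)-s).natAbs : ℝ)^2 := abs_derivT_eval_le _ x hx0 hx1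
          _ ≤ (s:ℝ)^2 := by
              have h1 : ((2*(j:ℤ)-s).natAbs : ℝ) ≤ s := by exact_mod_cast hn
              have h0 : (0:ℝ) ≤ ((2*(j:ℤ)-s).natAbs : ℝ) := Nat.cast_nonneg _
              nlinarith
      rw [abs_of_nonneg (show (0:ℝ) ≤ (s.choose j : ℝ) by positivity)]
      calc (s.choose j : ℝ) * |f j| ≤ (s.choose j : ℝ) * (s:ℝ)^2 := by
            gcongr
        _ = (s:ℝ)^2 * (s.choose j : ℝ) := by ring
  calc ((2:ℝ)^s)⁻¹ * |∑ j ∈ Finset.range (s+1),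
          ((s.choose j : ℝ) * ((if |2*(j:ℤ) - s| ≤ (r:ℤ) then f j else 0) - f j))|
      ≤ ((2:ℝ)^s)⁻¹ * ∑ j ∈ Finset.range (s+1),
          (s:ℝ)^2 * (if |2*(j:ℤ) - s| ≤ (r:ℤ) then (0:ℝ) else (s.choose j : ℝ)) := by
        gcongr
        exact (Finset.abs_sum_le_sum_abs _ _).trans (Finset.sum_le_sum hterm)
    _ ≤ ((2:ℝ)^s)⁻¹ * ((s:ℝ)^2 * (2^s * (2 * Real.exp (-(r:ℝ)^2 / (2*s))))) := by
        rw [← Finset.mul_sum]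
        gcongr
        exact tail_bound r s hs hrs
    _ = 2 * (s:ℝ)^2 * Real.exp (-(r:ℝ)^2 / (2*s)) := by
        field_simp
end

section
/- Let s ≥ 2 and ℓ ≥ 0 be even natural numbers and 0 ≤ r ≤ s. Then for all real x ≤ 0, we have 0 ≤ G_{r,s}(E_ℓ(x/s)) ≤ e^{|x|}. -/
/-- The exponential truncation polynomial E_ℓ(x) := ∑_{j=0}^{ℓ} (−1)^j x^j / j!. -/
noncomputable def E (ℓ : ℕ) (x : ℝ) : ℝ :=
  ∑ j ∈ Finset.range (ℓ + 1), (-1) ^ j * x ^ j / (Nat.factorial j)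

open Finset Real

lemma sum_choose_mul_exp_two_mul_sub (s : ℕ) (θ : ℝ) :
    ∑ j ∈ range (s + 1), (s.choose j : ℝ) * exp ((2 * j - s) * θ) = (2 * cosh θ) ^ s := by
  rw [cosh_eq, mul_div_cancel₀ _ two_ne_zero, add_pow]
  refine sum_congr rfl fun j hj => ?_
  have hjs : j ≤ s := Nat.lt_succ_iff.mp (mem_range.mp hj)
  rw [← exp_nat_mul, ← exp_nat_mul, ← exp_add, Nat.cast_sub hjs]
  ring_nf

lemma sum_choose_mul_cosh_two_mul_sub (s : ℕ) (θ : ℝ) :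
    ∑ j ∈ range (s + 1), (s.choose j : ℝ) * cosh ((2 * j - s) * θ) = (2 * cosh θ) ^ s := by
  calc ∑ j ∈ range (s + 1), (s.choose j : ℝ) * cosh ((2 * j - s) * θ)
      = (∑ j ∈ range (s + 1), (s.choose j : ℝ) * exp ((2 * j - s) * θ)
          + ∑ j ∈ range (s + 1), (s.choose j : ℝ) * exp ((2 * j - s) * -θ)) / 2 := by
        rw [← sum_add_distrib, sum_div]
        refine sum_congr rfl fun j _ => ?_
        rw [cosh_eq, mul_neg]
        ring
    _ = (2 * cosh θ) ^ s := by
        rw [sum_choose_mul_exp_two_mul_sub, sum_choose_mul_exp_two_mul_sub, cosh_neg]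
        ring

lemma G_eval_cosh (r s : ℕ) (θ : ℝ) :
    (G r s).eval (cosh θ) = (2 ^ s)⁻¹ * ∑ j ∈ range (s + 1), (s.choose j : ℝ) *
      if |2 * (j : ℤ) - s| ≤ r then cosh ((2 * j - s) * θ) else 0 := by
  simp only [G, Phi, Polynomial.eval_smul, Polynomial.eval_finsetSum, smul_eq_mul, apply_ite,
    Polynomial.eval_zero, Polynomial.Chebyshev.T_real_cosh]
  push_cast
  rfl

lemma G_eval_nonneg_of_one_le (r s : ℕ) {u : ℝ} (hu : 1 ≤ u) : 0 ≤ (G r s).eval u := by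
  rw [← cosh_arcosh hu, G_eval_cosh]
  refine mul_nonneg (by positivity) (sum_nonneg fun j _ => mul_nonneg (by positivity) ?_)
  split_ifs
  exacts [(cosh_pos _).le, le_rfl]

lemma G_eval_le_pow_of_one_le (r s : ℕ) {u : ℝ} (hu : 1 ≤ u) : (G r s).eval u ≤ u ^ s := by
  rw [← cosh_arcosh hu, G_eval_cosh]
  set θ := arcosh u
  have h : ∑ j ∈ range (s + 1), (s.choose j : ℝ) *
      (if |2 * (j : ℤ) - s| ≤ r then cosh ((2 * j - s) * θ) else 0) ≤ (2 * cosh θ) ^ s := by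
    rw [← sum_choose_mul_cosh_two_mul_sub]
    refine sum_le_sum fun j _ => mul_le_mul_of_nonneg_left ?_ (by positivity)
    split_ifs
    exacts [le_rfl, (cosh_pos _).le]
  calc (2 ^ s)⁻¹ * _ ≤ ((2 : ℝ) ^ s)⁻¹ * (2 * cosh θ) ^ s := by gcongr
    _ = cosh θ ^ s := by rw [mul_pow, inv_mul_cancel_left₀ (by positivity)]

lemma E_eq_sum_neg_pow_div_factorial (ℓ : ℕ) (y : ℝ) :
    E ℓ y = ∑ j ∈ range (ℓ + 1), (-y) ^ j / j.factorial := by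
  rw [E]
  refine sum_congr rfl fun j _ => ?_
  rw [neg_pow]
  ring

lemma one_le_E_of_nonpos (ℓ : ℕ) {y : ℝ} (hy : y ≤ 0) : 1 ≤ E ℓ y := by
  rw [E_eq_sum_neg_pow_div_factorial]
  calc (1 : ℝ) = (-y) ^ 0 / (0 : ℕ).factorial := by simp
    _ ≤ _ := single_le_sum (f := fun j => (-y) ^ j / j.factorial)
      (fun j _ => by have := neg_nonneg.2 hy; positivity) (by simp)

lemma E_le_exp_neg_of_nonpos (ℓ : ℕ) {y : ℝ} (hy : y ≤ 0) : E ℓ y ≤ exp (-y) := by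
  rw [E_eq_sum_neg_pow_div_factorial]
  exact sum_le_exp_of_nonneg (neg_nonneg.2 hy) (ℓ + 1)

theorem Q_small_x_bound_general (r s ℓ : ℕ) (x : ℝ) (hx : x ≤ 0) :
    0 ≤ (G r s).eval (E ℓ (x / s)) ∧ (G r s).eval (E ℓ (x / s)) ≤ Real.exp |x| := by
  have hy : x / s ≤ 0 := div_nonpos_of_nonpos_of_nonneg hx s.cast_nonneg
  have hE := one_le_E_of_nonpos ℓ hy
  refine ⟨G_eval_nonneg_of_one_le r s hE, (G_eval_le_pow_of_one_le r s hE).trans ?_⟩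
  calc E ℓ (x / s) ^ s ≤ exp (-(x / s)) ^ s :=
        pow_le_pow_left₀ (zero_le_one.trans hE) (E_le_exp_neg_of_nonpos ℓ hy) s
    _ = exp (-(x / s) * s) := by rw [← exp_nat_mul, mul_comm]
    _ ≤ exp |x| := by
        rw [exp_le_exp, abs_of_nonpos hx]
        rcases eq_or_ne (s : ℝ) 0 with hs | hs
        · simp [hs, hx]
        · rw [neg_mul, div_mul_cancel₀ x hs]

/-- For even s ≥ 2, even ℓ, 0 ≤ r ≤ s, and x ≤ 0: 0 ≤ G_{r,s}(E_ℓ(x/s)) ≤ e^{|x|}. -/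
theorem Q_small_x_bound (r s ℓ : ℕ) (hs2 : 2 ≤ s) (hse : Even s) (hℓe : Even ℓ)
    (hrs : r ≤ s) (x : ℝ) (hx : x ≤ 0) :
    0 ≤ (G r s).eval (E ℓ (x / s)) ∧ (G r s).eval (E ℓ (x / s)) ≤ Real.exp |x| :=
  Q_small_x_bound_general r s ℓ x hx
end
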